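/- arXiv:1202.5122 — 3 statements merged into one kernel-verified Lean document; each statement's English description precedes it below -/
import Mathlib

section
/- Let f : ℝ → ℝ be of class C^{n-1} for some n ≥ 1, with f^{(n-1)} absolutely continuous, and suppose there exist C > 0 and r ≥ 1 such that |f^{(n)}(ξ)| ≤ C (1+ξ²)^{(r-1)/2} for almost every ξ. Then for all integers m₀, m₁, ..., mₙ, the alternating sum over subsets I of {1,...,n} of (-1)^{|I|} f(m₀ + Σ_{j∈I} m_j) is bounded in absolute value by 2^{n(r-1)/2} · C · (1+m₀²)^{(r-1)/2} · ∏_{j=1}^{n} (1+m_j²)^{r/2}. -/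
/-! The sum is the iterated finite difference `Δ_{m₁} ⋯ Δ_{mₙ} f (m₀)`, where
`Δ_c g (y) = g y - g (y + c)`. Peeling off `Δ_c` with `c = mₙ` leaves a function of class one
lower whose top derivative `f^{(n-1)}(t) - f^{(n-1)}(t + c) = -∫_t^{t+c} f^{(n)}` is bounded,
thanks to Peetre's inequality `1 + (t + s)² ≤ 2 (1 + t²) (1 + s²)` and `|c| ≤ (1 + c²)^{1/2}`,
by `2^{(r-1)/2} C (1 + c²)^{r/2} · (1 + t²)^{(r-1)/2}`. This is the same growth condition with
a new constant, so the estimate follows by induction on `n`. -/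

open MeasureTheory Finset

lemma one_add_sq_add_le (t s : ℝ) : 1 + (t + s) ^ 2 ≤ 2 * (1 + t ^ 2) * (1 + s ^ 2) := by
  nlinarith [sq_nonneg (t - s), sq_nonneg (t * s)]

lemma one_add_sq_rpow_mul_abs_le (c s : ℝ) :
    (1 + c ^ 2) ^ s * |c| ≤ (1 + c ^ 2) ^ (s + 1 / 2) := by
  have hpos : 0 < 1 + c ^ 2 := by positivity
  have habs : |c| ≤ (1 + c ^ 2) ^ (1 / 2 : ℝ) := by
    rw [← Real.sqrt_eq_rpow, ← Real.sqrt_sq_eq_abs]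
    exact Real.sqrt_le_sqrt (by linarith)
  rw [Real.rpow_add hpos]
  exact mul_le_mul_of_nonneg_left habs (Real.rpow_nonneg hpos.le _)

lemma abs_intervalIntegral_add_le {C r : ℝ} (hr : 1 ≤ r) {φ : ℝ → ℝ}
    (hφ : ∀ᵐ ξ : ℝ, |φ ξ| ≤ C * (1 + ξ ^ 2) ^ ((r - 1) / 2)) (t c : ℝ) :
    |∫ s in t..t + c, φ s|
      ≤ 2 ^ ((r - 1) / 2) * C * (1 + t ^ 2) ^ ((r - 1) / 2) * (1 + c ^ 2) ^ (r / 2) := by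
  have hC : 0 ≤ C := by
    obtain ⟨ξ, hξ⟩ := hφ.exists
    exact nonneg_of_mul_nonneg_left ((abs_nonneg _).trans hξ) (by positivity)
  have he : 0 ≤ (r - 1) / 2 := by linarith
  set B := C * (2 * (1 + t ^ 2) * (1 + c ^ 2)) ^ ((r - 1) / 2) with hB
  have hφB : ∀ᵐ ξ : ℝ, ξ ∈ Set.uIoc t (t + c) → ‖φ ξ‖ ≤ B := by
    filter_upwards [hφ] with ξ hξ hmem
    have hdist : (ξ - t) ^ 2 ≤ c ^ 2 := by
      rcases Set.mem_uIoc.mp hmem with ⟨h₁, h₂⟩ | ⟨h₁, h₂⟩ <;> nlinarith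
    have hpeetre : 1 + ξ ^ 2 ≤ 2 * (1 + t ^ 2) * (1 + c ^ 2) := by
      nlinarith [one_add_sq_add_le t (ξ - t), sq_nonneg t]
    exact hξ.trans (mul_le_mul_of_nonneg_left (Real.rpow_le_rpow (by positivity) hpeetre he) hC)
  calc |∫ s in t..t + c, φ s| ≤ B * |t + c - t| :=
        intervalIntegral.norm_integral_le_of_norm_le_const_ae hφB
    _ = 2 ^ ((r - 1) / 2) * C * (1 + t ^ 2) ^ ((r - 1) / 2)
          * ((1 + c ^ 2) ^ ((r - 1) / 2) * |c|) := by
        rw [hB, add_sub_cancel_left, Real.mul_rpow (by positivity) (by positivity),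
          Real.mul_rpow (by positivity) (by positivity)]
        ring
    _ ≤ 2 ^ ((r - 1) / 2) * C * (1 + t ^ 2) ^ ((r - 1) / 2) * (1 + c ^ 2) ^ (r / 2) := by
        have := one_add_sq_rpow_mul_abs_le c ((r - 1) / 2)
        rw [show (r - 1) / 2 + 1 / 2 = r / 2 by ring] at this
        gcongr

lemma iteratedDeriv_sub_eq_integral {n : ℕ} {f : ℝ → ℝ} (hf : ContDiff ℝ (n + 1) f)
    (a b : ℝ) :
    iteratedDeriv n f b - iteratedDeriv n f a = ∫ t in a..b, iteratedDeriv (n + 1) f t := by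
  rw [iteratedDeriv_succ, intervalIntegral.integral_deriv_eq_sub]
  · exact fun x _ => (hf.differentiable_iteratedDeriv n (by norm_cast; omega)).differentiableAt
  · rw [← iteratedDeriv_succ]
    exact (hf.continuous_iteratedDeriv (n + 1) le_rfl).intervalIntegrable a b

lemma iteratedDeriv_sub_comp_add {n : ℕ} {f : ℝ → ℝ} (hf : ContDiff ℝ n f) (c x : ℝ) :
    iteratedDeriv n (fun y => f y - f (y + c)) x
      = iteratedDeriv n f x - iteratedDeriv n f (x + c) := by
  have hfc : ContDiff ℝ n fun y => f (y + c) := hf.comp (contDiff_id.add contDiff_const)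
  rw [iteratedDeriv_fun_sub hf.contDiffAt hfc.contDiffAt, iteratedDeriv_comp_add_const]

lemma iteratedDeriv_sub_comp_add_sub_eq_integral {n : ℕ} {f : ℝ → ℝ}
    (hf : ContDiff ℝ (n + 1) f) (c a b : ℝ) :
    iteratedDeriv n (fun y => f y - f (y + c)) b - iteratedDeriv n (fun y => f y - f (y + c)) a
      = ∫ t in a..b, (iteratedDeriv (n + 1) f t - iteratedDeriv (n + 1) f (t + c)) := by
  have hcont := hf.continuous_iteratedDeriv (n + 1) le_rfl
  have hcont_c : Continuous fun t => iteratedDeriv (n + 1) f (t + c) :=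
    hcont.comp (continuous_add_const c)
  have hf' : ContDiff ℝ n f := hf.of_le (by norm_cast; omega)
  rw [iteratedDeriv_sub_comp_add hf', iteratedDeriv_sub_comp_add hf',
    intervalIntegral.integral_sub (hcont.intervalIntegrable a b)
      (hcont_c.intervalIntegrable a b),
    intervalIntegral.integral_comp_add_right (iteratedDeriv (n + 1) f),
    ← iteratedDeriv_sub_eq_integral hf, ← iteratedDeriv_sub_eq_integral hf]
  ring

def finDiff {n : ℕ} (f : ℝ → ℝ) (x : ℝ) (m : Fin n → ℝ) : ℝ :=
  ∑ I : Finset (Fin n), (-1 : ℝ) ^ I.card * f (x + ∑ j ∈ I, m j)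

lemma finDiff_fin_zero (f : ℝ → ℝ) (x : ℝ) (m : Fin 0 → ℝ) : finDiff f x m = f x := by
  simp [finDiff, univ_unique, Subsingleton.elim (default : Finset (Fin 0)) ∅]

lemma sum_finset_fin_succ {M : Type*} [AddCommMonoid M] (n : ℕ) (F : Finset (Fin (n + 1)) → M) :
    ∑ I, F I = ∑ J : Finset (Fin n),
      (F (J.map Fin.castSuccEmb) + F (insert (Fin.last n) (J.map Fin.castSuccEmb))) := by
  rw [← powerset_univ, Fin.univ_castSuccEmb, cons_eq_insert, sum_powerset_insert (by simp),
    map_eq_image, powerset_image, sum_image (image_injective (Fin.castSuccEmb.injective)).injOn,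
    sum_image (image_injective (Fin.castSuccEmb.injective)).injOn, ← sum_add_distrib]
  simp [map_eq_image]

lemma finDiff_succ {n : ℕ} (f : ℝ → ℝ) (x : ℝ) (m : Fin (n + 1) → ℝ) :
    finDiff f x m = finDiff (fun y => f y - f (y + m (Fin.last n))) x (fun j => m j.castSucc) := by
  rw [finDiff, sum_finset_fin_succ, finDiff]
  refine sum_congr rfl fun J _ => ?_
  have hlast : Fin.last n ∉ J.map Fin.castSuccEmb := by simp
  rw [sum_insert hlast, card_insert_of_notMem hlast, card_map, sum_map]
  simp only [Fin.coe_castSuccEmb, pow_succ]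
  ring_nf

theorem abs_finDiff_le (n : ℕ) {C r : ℝ} (hr : 1 ≤ r) {f f' : ℝ → ℝ}
    (hf : ContDiff ℝ n f)
    (hFTC : ∀ a b : ℝ, iteratedDeriv n f b - iteratedDeriv n f a = ∫ t in a..b, f' t)
    (hbound : ∀ᵐ ξ : ℝ, |f' ξ| ≤ C * (1 + ξ ^ 2) ^ ((r - 1) / 2))
    (x : ℝ) (m : Fin (n + 1) → ℝ) :
    |finDiff f x m| ≤ 2 ^ (((n : ℝ) + 1) * (r - 1) / 2) * C * (1 + x ^ 2) ^ ((r - 1) / 2)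
      * ∏ j, (1 + m j ^ 2) ^ (r / 2) := by
  induction n generalizing C f f' with
  | zero =>
    have hdiff : f x - f (x + m 0) = -∫ t in x..x + m 0, f' t := by
      rw [← hFTC, iteratedDeriv_zero, neg_sub]
    rw [finDiff_succ, finDiff_fin_zero, Fin.last_zero, hdiff, abs_neg, Fin.prod_univ_one]
    simpa using abs_intervalIntegral_add_le hr hbound x (m 0)
  | succ k ih =>
    set c := m (Fin.last (k + 1))
    have hg : ContDiff ℝ k fun y => f y - f (y + c) :=
      (hf.sub (hf.comp (contDiff_id.add contDiff_const))).of_le (by norm_cast; omega)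
    have hg' : ∀ᵐ t : ℝ, |iteratedDeriv (k + 1) f t - iteratedDeriv (k + 1) f (t + c)|
        ≤ 2 ^ ((r - 1) / 2) * (1 + c ^ 2) ^ (r / 2) * C * (1 + t ^ 2) ^ ((r - 1) / 2) := by
      refine Filter.Eventually.of_forall fun t => ?_
      rw [← abs_neg, neg_sub, hFTC]
      linarith [abs_intervalIntegral_add_le hr hbound t c]
    rw [finDiff_succ]
    refine (ih hg (iteratedDeriv_sub_comp_add_sub_eq_integral hf c) hg' _).trans_eq ?_
    rw [Fin.prod_univ_castSucc fun j => (1 + m j ^ 2) ^ (r / 2),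
      show ((k + 1 : ℕ) + 1 : ℝ) * (r - 1) / 2 = ((k : ℝ) + 1) * (r - 1) / 2 + (r - 1) / 2 by
        push_cast; ring,
      Real.rpow_add two_pos]
    ring

theorem stmt0_general (n : ℕ) (hn : 1 ≤ n) (C r : ℝ) (hr : 1 ≤ r)
    (f f' : ℝ → ℝ)
    (hf : ContDiff ℝ ((n - 1 : ℕ) : ℕ∞) f)
    (hFTC : ∀ a b : ℝ, iteratedDeriv (n - 1) f b - iteratedDeriv (n - 1) f a
      = ∫ t in a..b, f' t)
    (hbound : ∀ᵐ ξ : ℝ, |f' ξ| ≤ C * (1 + ξ ^ 2) ^ ((r - 1) / 2)) :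
    ∀ (m₀ : ℤ) (m : Fin n → ℤ),
      |∑ I : Finset (Fin n), (-1 : ℝ) ^ I.card * f ((m₀ : ℝ) + ∑ j ∈ I, (m j : ℝ))|
        ≤ 2 ^ ((n : ℝ) * (r - 1) / 2) * C * (1 + (m₀ : ℝ) ^ 2) ^ ((r - 1) / 2)
          * ∏ j, (1 + (m j : ℝ) ^ 2) ^ (r / 2) := by
  obtain ⟨k, rfl⟩ : ∃ k, n = k + 1 := ⟨n - 1, by omega⟩
  intro m₀ m
  rw [Nat.cast_succ]
  exact abs_finDiff_le k hr hf hFTC hbound m₀ fun j => (m j : ℝ)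

/-- If `f : ℝ → ℝ` is `C^{n-1}` (`n ≥ 1`), `f^{(n-1)}` is absolutely
continuous with a.e. derivative `f'` satisfying `|f'(ξ)| ≤ C (1+ξ²)^{(r-1)/2}` a.e.
(`C > 0`, `r ≥ 1`), then the `n`-fold alternating sum of `f` over subsets of `{1,…,n}`
is bounded by `2^{n(r-1)/2} C (1+m₀²)^{(r-1)/2} ∏_j (1+m_j²)^{r/2}`. -/
theorem stmt0 (n : ℕ) (hn : 1 ≤ n) (C r : ℝ) (hC : 0 < C) (hr : 1 ≤ r)
    (f f' : ℝ → ℝ)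
    (hf : ContDiff ℝ ((n - 1 : ℕ) : ℕ∞) f)
    (hloc : LocallyIntegrable f' volume)
    (hFTC : ∀ a b : ℝ, iteratedDeriv (n - 1) f b - iteratedDeriv (n - 1) f a
      = ∫ t in a..b, f' t)
    (hbound : ∀ᵐ ξ : ℝ, |f' ξ| ≤ C * (1 + ξ ^ 2) ^ ((r - 1) / 2)) :
    ∀ (m₀ : ℤ) (m : Fin n → ℤ),
      |∑ I : Finset (Fin n), (-1 : ℝ) ^ I.card * f ((m₀ : ℝ) + ∑ j ∈ I, (m j : ℝ))|
        ≤ 2 ^ ((n : ℝ) * (r - 1) / 2) * C * (1 + (m₀ : ℝ) ^ 2) ^ ((r - 1) / 2)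
          * ∏ j, (1 + (m j : ℝ) ^ 2) ^ (r / 2) :=
  stmt0_general n hn C r hr f f' hf hFTC hbound
end

section
/- Define sequences of functions p_n : ℤ^{n+1} → ℂ by p₀ = p (an arbitrary function ℤ → ℂ) and the recursion p_{n+1}(m₀,...,m_{n+1}) = (2πi)[(m₀+⋯+mₙ) p_n(m₀,...,mₙ) − Σ_{k=0}^{n} m_k · p_n(m₀,...,m_k + m_{n+1},...,mₙ)]. Then for every n ≥ 1, p_n(m₀, m₁, ..., mₙ) = (2πi)ⁿ m₀ Σ_{p=0}^{n} (-1)^p Σ_{I ⊆ {1,...,n}, |I|=p} f_n(m₀ + Σ_{j∈I} m_j), where f_n(k) := k^{n-1} p(k). -/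
open Finset



lemma preim_map (n : ℕ) (I : Finset (Fin n)) :
    (I.map Fin.castSuccEmb).preimage Fin.castSucc
      ((Fin.castSucc_injective n).injOn) = I := by
  ext a
  simp only [Finset.mem_preimage, Finset.mem_map, Fin.castSuccEmb, Function.Embedding.coeFn_mk]
  constructor
  · rintro ⟨b, hb, h⟩
    have hb' : b = a := Fin.castSucc_injective n h
    exact hb' ▸ hb
  · exact fun h => ⟨a, h, rfl⟩

lemma map_preim (n : ℕ) (J : Finset (Fin (n+1))) (hJ : Fin.last n ∉ J) :
    (J.preimage Fin.castSucc ((Fin.castSucc_injective n).injOn)).map Fin.castSuccEmb = J := by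
  ext x
  simp only [Finset.mem_map, Finset.mem_preimage, Fin.castSuccEmb, Function.Embedding.coeFn_mk]
  constructor
  · rintro ⟨a, ha, rfl⟩; exact ha
  · intro hx
    rcases Fin.exists_castSucc_eq.2 (fun h => hJ (h ▸ hx)) with ⟨j, rfl⟩
    exact ⟨j, hx, rfl⟩

lemma last_not_mem_map (n : ℕ) (I : Finset (Fin n)) : Fin.last n ∉ I.map Fin.castSuccEmb := by
  simp only [Finset.mem_map, Fin.castSuccEmb, Function.Embedding.coeFn_mk]
  rintro ⟨a, _, ha⟩
  exact (Fin.castSucc_lt_last a).ne ha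

lemma splitlem {M : Type*} [AddCommMonoid M] (n : ℕ) (F : Finset (Fin (n+1)) → M) :
    ∑ J : Finset (Fin (n+1)), F J
      = ∑ I : Finset (Fin n), F (I.map Fin.castSuccEmb)
        + ∑ I : Finset (Fin n), F (insert (Fin.last n) (I.map Fin.castSuccEmb)) := by
  rw [← Finset.sum_filter_add_sum_filter_not univ (fun J => Fin.last n ∉ J)]
  congr 1
  · refine Finset.sum_nbij' (i := fun J => J.preimage Fin.castSucc ((Fin.castSucc_injective n).injOn))
      (j := fun I => I.map Fin.castSuccEmb) ?_ ?_ ?_ ?_ ?_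
    · intro J _; exact Finset.mem_univ _
    · intro I _
      simp only [Finset.mem_filter, Finset.mem_univ, true_and]
      exact last_not_mem_map n I
    · intro J hJ; exact map_preim n J (by simpa using (Finset.mem_filter.1 hJ).2)
    · intro I _; exact preim_map n I
    · intro J hJ; rw [map_preim n J (by simpa using (Finset.mem_filter.1 hJ).2)]
  · refine Finset.sum_nbij' (i := fun J => J.preimage Fin.castSucc ((Fin.castSucc_injective n).injOn))
      (j := fun I => insert (Fin.last n) (I.map Fin.castSuccEmb)) ?_ ?_ ?_ ?_ ?_
    · intro J _; exact Finset.mem_univ _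
    · intro I _; simp
    · intro J hJ
      beta_reduce
      have hl : Fin.last n ∈ J := by simpa using (Finset.mem_filter.1 hJ).2
      have h2 : J.preimage Fin.castSucc ((Fin.castSucc_injective n).injOn)
          = (J.erase (Fin.last n)).preimage Fin.castSucc ((Fin.castSucc_injective n).injOn) := by
        ext a; simp [Finset.mem_preimage, Finset.mem_erase, (Fin.castSucc_lt_last a).ne]
      rw [h2, map_preim n _ (Finset.notMem_erase _ _), Finset.insert_erase hl]
    · intro I _
      beta_reduce
      have h1 : (insert (Fin.last n) (I.map Fin.castSuccEmb)).preimage Fin.castSucc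
          ((Fin.castSucc_injective n).injOn)
          = (I.map Fin.castSuccEmb).preimage Fin.castSucc ((Fin.castSucc_injective n).injOn) := by
        ext a; simp [Finset.mem_preimage, (Fin.castSucc_lt_last a).ne]
      rw [h1, preim_map]
    · intro J hJ
      beta_reduce
      have hl : Fin.last n ∈ J := by simpa using (Finset.mem_filter.1 hJ).2
      have h2 : J.preimage Fin.castSucc ((Fin.castSucc_injective n).injOn)
          = (J.erase (Fin.last n)).preimage Fin.castSucc ((Fin.castSucc_injective n).injOn) := by
        ext a; simp [Finset.mem_preimage, Finset.mem_erase, (Fin.castSucc_lt_last a).ne]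
      rw [h2, map_preim n _ (Finset.notMem_erase _ _), Finset.insert_erase hl]

lemma pull {α β : Type*} [Fintype α] [Fintype β] (C : ℂ) (a : α → ℂ) (g : β → α → ℂ) :
    ∑ x : α, a x * (C * ∑ I : β, g I x) = C * ∑ I : β, ∑ x : α, a x * g I x := by
  calc ∑ x : α, a x * (C * ∑ I : β, g I x) = ∑ x : α, ∑ I : β, a x * (C * g I x) := by
        refine Finset.sum_congr rfl fun x _ => ?_
        rw [Finset.mul_sum, Finset.mul_sum]
    _ = ∑ I : β, ∑ x : α, a x * (C * g I x) := Finset.sum_comm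
    _ = C * ∑ I : β, ∑ x : α, a x * g I x := by
        rw [Finset.mul_sum]
        refine Finset.sum_congr rfl fun I _ => ?_
        rw [Finset.mul_sum]
        exact Finset.sum_congr rfl fun x _ => by ring


/-- The multi-symbols `p_n` of the derivatives of a conjugated Fourier multiplier with
symbol `p`, defined by the recursion
`p_{n+1}(m₀,…,m_{n+1}) = 2πi [(m₀+⋯+mₙ) pₙ(m₀,…,mₙ) − Σ_{k=0}^n m_k pₙ(…, m_k+m_{n+1}, …)]`.
Here the first argument `m₀` is kept separate from `m₁,…,mₙ : Fin n → ℤ`. -/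
noncomputable def symb (p : ℤ → ℂ) : (n : ℕ) → ℤ → (Fin n → ℤ) → ℂ
  | 0, m₀, _ => p m₀
  | n + 1, m₀, m =>
      (2 * Real.pi * Complex.I) *
        (((m₀ + ∑ k : Fin n, m k.castSucc : ℤ) : ℂ) * symb p n m₀ (fun j => m j.castSucc)
          - ((m₀ : ℂ) * symb p n (m₀ + m (Fin.last n)) (fun j => m j.castSucc)
            + ∑ k : Fin n, ((m k.castSucc : ℤ) : ℂ) *
                symb p n m₀
                  (Function.update (fun j => m j.castSucc) k
                    (m k.castSucc + m (Fin.last n)))))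

/-- For every `n ≥ 1`,
`pₙ(m₀,…,mₙ) = (2πi)ⁿ m₀ Σ_{I ⊆ {1,…,n}} (-1)^{|I|} fₙ(m₀ + Σ_{j∈I} m_j)` where
`fₙ(k) = k^{n-1} p(k)`. -/
theorem stmt3 (p : ℤ → ℂ) (n : ℕ) (hn : 1 ≤ n) (m₀ : ℤ) (m : Fin n → ℤ) :
    symb p n m₀ m
      = (2 * Real.pi * Complex.I) ^ n * (m₀ : ℂ) *
          ∑ I : Finset (Fin n), (-1 : ℂ) ^ I.card *
            (((m₀ + ∑ j ∈ I, m j : ℤ) : ℂ) ^ (n - 1) * p (m₀ + ∑ j ∈ I, m j)) := by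
  induction n, hn using Nat.le_induction generalizing m₀ with
  | base =>
    rw [show (univ : Finset (Finset (Fin 1))) = {∅, {0}} from by decide,
      Finset.sum_insert (by decide), Finset.sum_singleton]
    simp [symb, Fin.last]
    ring
  | succ n hn ih =>
    rw [show symb p (n+1) m₀ m = (2 * Real.pi * Complex.I) *
          (((m₀ + ∑ k : Fin n, m k.castSucc : ℤ) : ℂ) * symb p n m₀ (fun j => m j.castSucc)
            - ((m₀ : ℂ) * symb p n (m₀ + m (Fin.last n)) (fun j => m j.castSucc)
              + ∑ k : Fin n, ((m k.castSucc : ℤ) : ℂ) *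
                  symb p n m₀
                    (Function.update (fun j => m j.castSucc) k
                      (m k.castSucc + m (Fin.last n))))) from rfl]
    simp only [ih]
    have hupd : ∀ (k : Fin n) (I : Finset (Fin n)),
        (∑ j ∈ I, Function.update (fun j => m j.castSucc) k (m k.castSucc + m (Fin.last n)) j)
          = (∑ j ∈ I, m j.castSucc) + (if k ∈ I then m (Fin.last n) else 0) := by
      intro k I
      by_cases hk : k ∈ I
      · rw [Finset.sum_update_of_mem hk, if_pos hk, ← Finset.erase_eq,
          ← Finset.add_sum_erase I _ hk]
        ring
      · rw [Finset.sum_update_of_notMem hk, if_neg hk, add_zero]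
    simp only [hupd]
    rw [pull]
    simp only [Nat.add_sub_cancel]
    rw [splitlem n (fun J => (-1:ℂ)^J.card * (((m₀ + ∑ j ∈ J, m j : ℤ):ℂ)^n * p (m₀ + ∑ j ∈ J, m j)))]
    have hmap : ∑ I : Finset (Fin n), (-1:ℂ)^(I.map Fin.castSuccEmb).card *
          (((m₀ + ∑ j ∈ I.map Fin.castSuccEmb, m j : ℤ):ℂ)^n * p (m₀ + ∑ j ∈ I.map Fin.castSuccEmb, m j))
        = ∑ I : Finset (Fin n), (-1:ℂ)^I.card *
          (((m₀ + ∑ k ∈ I, m k.castSucc : ℤ):ℂ)^n * p (m₀ + ∑ k ∈ I, m k.castSucc)) := by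
      refine Finset.sum_congr rfl fun I _ => ?_
      rw [Finset.card_map, Finset.sum_map]
      rfl
    have hins : ∑ I : Finset (Fin n), (-1:ℂ)^(insert (Fin.last n) (I.map Fin.castSuccEmb)).card *
          (((m₀ + ∑ j ∈ insert (Fin.last n) (I.map Fin.castSuccEmb), m j : ℤ):ℂ)^n *
            p (m₀ + ∑ j ∈ insert (Fin.last n) (I.map Fin.castSuccEmb), m j))
        = -∑ I : Finset (Fin n), (-1:ℂ)^I.card *
          (((m₀ + ∑ k ∈ I, m k.castSucc + m (Fin.last n) : ℤ):ℂ)^n *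
            p (m₀ + ∑ k ∈ I, m k.castSucc + m (Fin.last n))) := by
      rw [← Finset.sum_neg_distrib]
      refine Finset.sum_congr rfl fun I _ => ?_
      rw [Finset.card_insert_of_notMem (last_not_mem_map n I),
        Finset.sum_insert (last_not_mem_map n I), Finset.card_map, Finset.sum_map, pow_succ]
      have harg : ∀ x : Fin n, m (Fin.castSuccEmb x) = m x.castSucc := fun _ => rfl
      simp only [harg]
      rw [show (m₀ + (m (Fin.last n) + ∑ j ∈ I, m j.castSucc)) =
          m₀ + ∑ k ∈ I, m k.castSucc + m (Fin.last n) from by ring]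
      ring
    rw [hmap, hins]
    have hpow : ∀ a : ℤ, ((a:ℂ))^n = (a:ℂ) * (a:ℂ)^(n-1) := by
      intro a
      conv_lhs => rw [← Nat.sub_add_cancel hn, pow_succ']
    have hstar :
        ((m₀ + ∑ k : Fin n, m k.castSucc : ℤ):ℂ) *
            (∑ I : Finset (Fin n), (-1:ℂ)^I.card *
              (((m₀ + ∑ k ∈ I, m k.castSucc : ℤ):ℂ)^(n-1) * p (m₀ + ∑ k ∈ I, m k.castSucc)))
          - ((m₀ + m (Fin.last n) : ℤ):ℂ) *
            (∑ I : Finset (Fin n), (-1:ℂ)^I.card *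
              (((m₀ + m (Fin.last n) + ∑ k ∈ I, m k.castSucc : ℤ):ℂ)^(n-1) *
                p (m₀ + m (Fin.last n) + ∑ k ∈ I, m k.castSucc)))
          - ∑ I : Finset (Fin n), ∑ x : Fin n, ((m x.castSucc : ℤ):ℂ) *
              ((-1:ℂ)^I.card *
                (((m₀ + (∑ k ∈ I, m k.castSucc + if x ∈ I then m (Fin.last n) else 0) : ℤ):ℂ)^(n-1) *
                  p (m₀ + (∑ k ∈ I, m k.castSucc + if x ∈ I then m (Fin.last n) else 0))))
        = (∑ I : Finset (Fin n), (-1:ℂ)^I.card *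
              (((m₀ + ∑ k ∈ I, m k.castSucc : ℤ):ℂ)^n * p (m₀ + ∑ k ∈ I, m k.castSucc)))
          - ∑ I : Finset (Fin n), (-1:ℂ)^I.card *
              (((m₀ + ∑ k ∈ I, m k.castSucc + m (Fin.last n) : ℤ):ℂ)^n *
                p (m₀ + ∑ k ∈ I, m k.castSucc + m (Fin.last n))) := by
      rw [Finset.mul_sum, Finset.mul_sum, ← Finset.sum_sub_distrib, ← Finset.sum_sub_distrib,
        ← Finset.sum_sub_distrib]
      refine Finset.sum_congr rfl fun I _ => ?_
      have hxI : (∑ x : Fin n, ((m x.castSucc : ℤ):ℂ) *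
              ((-1:ℂ)^I.card *
                (((m₀ + (∑ k ∈ I, m k.castSucc + if x ∈ I then m (Fin.last n) else 0) : ℤ):ℂ)^(n-1) *
                  p (m₀ + (∑ k ∈ I, m k.castSucc + if x ∈ I then m (Fin.last n) else 0)))))
          = ((∑ k ∈ I, m k.castSucc : ℤ):ℂ) *
              ((-1:ℂ)^I.card *
                (((m₀ + ∑ k ∈ I, m k.castSucc + m (Fin.last n) : ℤ):ℂ)^(n-1) *
                  p (m₀ + ∑ k ∈ I, m k.castSucc + m (Fin.last n))))
            + ((∑ k ∈ Iᶜ, m k.castSucc : ℤ):ℂ) *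
              ((-1:ℂ)^I.card *
                (((m₀ + ∑ k ∈ I, m k.castSucc : ℤ):ℂ)^(n-1) * p (m₀ + ∑ k ∈ I, m k.castSucc))) := by
        rw [← Finset.sum_add_sum_compl I]
        congr 1
        · calc (∑ x ∈ I, ((m x.castSucc : ℤ):ℂ) *
                ((-1:ℂ)^I.card *
                  (((m₀ + (∑ k ∈ I, m k.castSucc + if x ∈ I then m (Fin.last n) else 0) : ℤ):ℂ)^(n-1) *
                    p (m₀ + (∑ k ∈ I, m k.castSucc + if x ∈ I then m (Fin.last n) else 0)))))
              = ∑ x ∈ I, ((m x.castSucc : ℤ):ℂ) *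
                ((-1:ℂ)^I.card *
                  (((m₀ + ∑ k ∈ I, m k.castSucc + m (Fin.last n) : ℤ):ℂ)^(n-1) *
                    p (m₀ + ∑ k ∈ I, m k.castSucc + m (Fin.last n)))) := by
                refine Finset.sum_congr rfl fun x hx => ?_
                rw [if_pos hx,
                  show m₀ + (∑ k ∈ I, m k.castSucc + m (Fin.last n))
                    = m₀ + ∑ k ∈ I, m k.castSucc + m (Fin.last n) from by ring]
            _ = ((∑ k ∈ I, m k.castSucc : ℤ):ℂ) *
                ((-1:ℂ)^I.card *
                  (((m₀ + ∑ k ∈ I, m k.castSucc + m (Fin.last n) : ℤ):ℂ)^(n-1) *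
                    p (m₀ + ∑ k ∈ I, m k.castSucc + m (Fin.last n)))) := by
                rw [← Finset.sum_mul, Int.cast_sum]
        · calc (∑ x ∈ Iᶜ, ((m x.castSucc : ℤ):ℂ) *
                ((-1:ℂ)^I.card *
                  (((m₀ + (∑ k ∈ I, m k.castSucc + if x ∈ I then m (Fin.last n) else 0) : ℤ):ℂ)^(n-1) *
                    p (m₀ + (∑ k ∈ I, m k.castSucc + if x ∈ I then m (Fin.last n) else 0)))))
              = ∑ x ∈ Iᶜ, ((m x.castSucc : ℤ):ℂ) *
                ((-1:ℂ)^I.card *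
                  (((m₀ + ∑ k ∈ I, m k.castSucc : ℤ):ℂ)^(n-1) *
                    p (m₀ + ∑ k ∈ I, m k.castSucc))) := by
                refine Finset.sum_congr rfl fun x hx => ?_
                rw [if_neg (Finset.mem_compl.1 hx),
                  show m₀ + (∑ k ∈ I, m k.castSucc + 0) = m₀ + ∑ k ∈ I, m k.castSucc from by ring]
            _ = ((∑ k ∈ Iᶜ, m k.castSucc : ℤ):ℂ) *
                ((-1:ℂ)^I.card *
                  (((m₀ + ∑ k ∈ I, m k.castSucc : ℤ):ℂ)^(n-1) * p (m₀ + ∑ k ∈ I, m k.castSucc))) := by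
                rw [← Finset.sum_mul, Int.cast_sum]
      rw [hxI, hpow (m₀ + ∑ k ∈ I, m k.castSucc), hpow (m₀ + ∑ k ∈ I, m k.castSucc + m (Fin.last n)),
        show m₀ + m (Fin.last n) + ∑ k ∈ I, m k.castSucc
          = m₀ + ∑ k ∈ I, m k.castSucc + m (Fin.last n) from by ring,
        show (m₀ + ∑ k : Fin n, m k.castSucc)
          = m₀ + ((∑ k ∈ I, m k.castSucc) + ∑ k ∈ Iᶜ, m k.castSucc) from by
            rw [Finset.sum_add_sum_compl]]
      push_cast
      ring
    linear_combination (2 * Real.pi * Complex.I) * (2 * Real.pi * Complex.I)^n * (m₀:ℂ) * hstar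
end

section
/- Let P be a continuous linear operator on the Fréchet space C^∞(𝕊¹, ℂ). The following are equivalent: (1) P commutes with all rotation operators R_s (where R_s u(x) = u(x+s)); (2) P commutes with d/dx; (3) for each n ∈ ℤ there exists p(n) ∈ ℂ with P e_n = p(n) e_n, where e_n(x) = exp(2πinx). -/
open Filter

/-- A smooth `1`-periodic function `ℝ → ℂ`, i.e. an element of `C^∞(𝕊¹, ℂ)`. -/
def SmoothPeriodic (u : ℝ → ℂ) : Prop :=
  ContDiff ℝ (⊤ : ℕ∞) u ∧ Function.Periodic u 1

noncomputable section Stmt13Aux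

open Complex Set Topology

/-- The exponential `e_n(x) = exp (2πinx)`. -/
def Efun (n : ℤ) : ℝ → ℂ := fun x : ℝ => Complex.exp (2 * Real.pi * Complex.I * n * (x : ℂ))

lemma Efun_hasDerivAt (n : ℤ) (x : ℝ) :
    HasDerivAt (Efun n) (2 * Real.pi * Complex.I * n * Efun n x) x := by
  have h1 : HasDerivAt (fun z : ℂ => Complex.exp (2 * Real.pi * Complex.I * n * z))
      (Complex.exp (2 * Real.pi * Complex.I * n * x) * (2 * Real.pi * Complex.I * n)) x := by
    simpa [Function.comp_def] using (Complex.hasDerivAt_exp _).comp (x : ℂ)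
      ((hasDerivAt_id (x : ℂ)).const_mul (2 * Real.pi * Complex.I * (n : ℂ)))
  have h2 := h1.comp_ofReal
  refine h2.congr_deriv ?_
  simp only [Efun]; ring

lemma Efun_contDiff (n : ℤ) : ContDiff ℝ (⊤ : ℕ∞) (Efun n) :=
  (contDiff_const.mul Complex.ofRealCLM.contDiff).cexp

lemma Efun_periodic (n : ℤ) : Function.Periodic (Efun n) 1 := by
  intro x
  simp only [Efun, Complex.ofReal_add, Complex.ofReal_one, mul_add, mul_one, Complex.exp_add]
  have h : Complex.exp (2 * Real.pi * Complex.I * n) = 1 := by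
    rw [show (2 * (Real.pi : ℂ) * Complex.I * n) = n * (2 * Real.pi * Complex.I) by ring]
    exact Complex.exp_int_mul_two_pi_mul_I n
  rw [h, mul_one]

lemma Efun_smoothPeriodic (n : ℤ) : SmoothPeriodic (Efun n) :=
  ⟨Efun_contDiff n, Efun_periodic n⟩

lemma Efun_zero_eval (n : ℤ) : Efun n 0 = 1 := by simp [Efun]

lemma Efun_add (n : ℤ) (x s : ℝ) : Efun n (x + s) = Efun n s * Efun n x := by
  simp only [Efun, Complex.ofReal_add, mul_add, Complex.exp_add]; ring

lemma Efun_mul_neg (n : ℤ) (x : ℝ) : Efun n x * Efun (-n) x = 1 := by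
  simp only [Efun, ← Complex.exp_add, Int.cast_neg]
  rw [show 2 * (Real.pi : ℂ) * Complex.I * n * x
      + 2 * Real.pi * Complex.I * (-(n : ℂ)) * x = 0 by ring]
  exact Complex.exp_zero

lemma deriv_Efun (n : ℤ) : deriv (Efun n) = fun x => 2 * Real.pi * Complex.I * n * Efun n x :=
  funext fun x => (Efun_hasDerivAt n x).deriv

lemma SmoothPeriodic.deriv' {u : ℝ → ℂ} (hu : SmoothPeriodic u) : SmoothPeriodic (deriv u) := by
  refine ⟨(contDiff_infty_iff_deriv.mp hu.1).2, fun x => ?_⟩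
  have h : (fun y => u (y + 1)) = u := funext fun y => hu.2 y
  rw [← deriv_comp_add_const u 1 x, h]

lemma SmoothPeriodic.differentiable' {u : ℝ → ℂ} (hu : SmoothPeriodic u) : Differentiable ℝ u :=
  hu.1.differentiable (by simp)

lemma SmoothPeriodic.iteratedDeriv' {u : ℝ → ℂ} (hu : SmoothPeriodic u) (k : ℕ) :
    SmoothPeriodic (iteratedDeriv k u) := by
  induction k with
  | zero => simpa [iteratedDeriv_zero] using hu
  | succ k ih => rw [iteratedDeriv_succ]; exact ih.deriv'

lemma SmoothPeriodic.shift {u : ℝ → ℂ} (hu : SmoothPeriodic u) (s : ℝ) :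
    SmoothPeriodic (fun x => u (x + s)) := by
  refine ⟨hu.1.comp (contDiff_id.add contDiff_const), fun x => ?_⟩
  show u (x + 1 + s) = u (x + s)
  rw [add_right_comm]
  exact hu.2 (x + s)

lemma SmoothPeriodic.const_smul {u : ℝ → ℂ} (hu : SmoothPeriodic u) (c : ℂ) :
    SmoothPeriodic (c • u) :=
  ⟨hu.1.const_smul c, fun x => by simp only [Pi.smul_apply, hu.2 x]⟩

/-- finite trigonometric sums -/
def trig (t : Finset ℤ) (b : ℤ → ℂ) : ℝ → ℂ := fun x => ∑ i ∈ t, b i * Efun i x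

lemma trig_smoothPeriodic (t : Finset ℤ) (b : ℤ → ℂ) : SmoothPeriodic (trig t b) := by
  constructor
  · exact ContDiff.sum fun i _ => contDiff_const.mul (Efun_smoothPeriodic i).1
  · intro x
    exact Finset.sum_congr rfl fun i _ => by rw [(Efun_smoothPeriodic i).2 x]

lemma iteratedDeriv_trig (k : ℕ) (t : Finset ℤ) (b : ℤ → ℂ) :
    iteratedDeriv k (trig t b) = trig t (fun i => (2 * Real.pi * Complex.I * i) ^ k * b i) := by
  induction k with
  | zero => simp [iteratedDeriv_zero, trig]
  | succ k ih =>
    rw [iteratedDeriv_succ, ih]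
    funext x
    rw [show trig t (fun i => (2 * Real.pi * Complex.I * i) ^ k * b i) =
      (fun x => ∑ i ∈ t, (2 * Real.pi * Complex.I * i) ^ k * b i * Efun i x) from rfl]
    rw [deriv_fun_sum (fun i _ => (((Efun_hasDerivAt i x).const_mul _).differentiableAt))]
    refine Finset.sum_congr rfl fun i _ => ?_
    rw [((Efun_hasDerivAt i x).const_mul ((2 * Real.pi * Complex.I * i) ^ k * b i)).deriv]
    show _ = (2 * Real.pi * Complex.I * ↑i) ^ (k + 1) * b i * Efun i x
    ring

/-- Fourier coefficient of a (periodic) function, as an integral over `[0,1]`. -/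
def fc (u : ℝ → ℂ) (n : ℤ) : ℂ := fourierCoeffOn one_pos u n

lemma fc_deriv {u : ℝ → ℂ} (hu : SmoothPeriodic u) (n : ℤ) :
    fc (deriv u) n = 2 * Real.pi * Complex.I * n * fc u n := by
  have hdc : Continuous (deriv u) := hu.deriv'.differentiable'.continuous
  rcases eq_or_ne n 0 with rfl | hn
  · simp only [Int.cast_zero, mul_zero, zero_mul]
    have h : fc (deriv u) 0 = (1 / ((1:ℝ) - 0)) • ∫ x in (0:ℝ)..1,
        fourier (-0) (x : AddCircle ((1:ℝ) - 0)) • deriv u x := fourierCoeffOn_eq_integral _ _ _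
    rw [h]
    simp only [neg_zero, fourier_zero, one_smul, smul_eq_mul, one_mul]
    rw [intervalIntegral.integral_deriv_eq_sub (fun x _ => hu.differentiable' x)
      (hdc.intervalIntegrable _ _)]
    rw [show u 1 = u 0 by simpa using hu.2 0]
    simp
  · have key := fourierCoeffOn_of_hasDerivAt one_pos hn
      (f := u) (f' := deriv u)
      (fun x _ => (hu.differentiable' x).hasDerivAt)
      (hdc.intervalIntegrable _ _)
    have h10 : u 1 = u 0 := by simpa using hu.2 0
    rw [h10] at key
    simp only [sub_self, mul_zero, zero_sub, fc] at key ⊢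
    rw [key]
    have hπ : (2 * (Real.pi:ℂ) * Complex.I * n) ≠ 0 := by
      simp [Real.pi_ne_zero, Complex.ext_iff, hn, Complex.I_ne_zero, mul_ne_zero]
    field_simp
    simp

lemma fc_iteratedDeriv {u : ℝ → ℂ} (hu : SmoothPeriodic u) (k : ℕ) (n : ℤ) :
    fc (iteratedDeriv k u) n = (2 * Real.pi * Complex.I * n) ^ k * fc u n := by
  induction k with
  | zero => simp [iteratedDeriv_zero]
  | succ k ih =>
    rw [iteratedDeriv_succ, fc_deriv (hu.iteratedDeriv' k), ih, pow_succ]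
    ring

lemma fc_norm_le {u : ℝ → ℂ} {C : ℝ} (hC : ∀ x ∈ Set.Icc (0:ℝ) 1, ‖u x‖ ≤ C) (n : ℤ) :
    ‖fc u n‖ ≤ C := by
  have h : fc u n = (1 / ((1:ℝ) - 0)) • ∫ x in (0:ℝ)..1,
      fourier (-n) (x : AddCircle ((1:ℝ) - 0)) • u x := fourierCoeffOn_eq_integral _ _ _
  rw [h]
  simp only [sub_zero, div_one, one_smul]
  have hb := intervalIntegral.norm_integral_le_of_norm_le_const (C := C)
    (f := fun x : ℝ => fourier (-n) (x : AddCircle ((1:ℝ) - 0)) • u x) (a := 0) (b := 1) ?_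
  · simpa using hb
  · intro x hx
    rw [norm_smul]
    have h1 : ‖(fourier (-n) ((x : ℝ) : AddCircle ((1:ℝ) - 0)) : ℂ)‖ = 1 := Circle.norm_coe _
    rw [h1, one_mul]
    refine hC x ?_
    rw [Set.uIoc_of_le (by norm_num : (0:ℝ) ≤ 1)] at hx
    exact ⟨hx.1.le, hx.2⟩

lemma fc_summable {u : ℝ → ℂ} (hu : SmoothPeriodic u) : Summable (fc u) := by
  obtain ⟨C, hC⟩ := (isCompact_Icc (a := (0:ℝ)) (b := 1)).exists_bound_of_continuousOn
    ((hu.iteratedDeriv' 2).differentiable'.continuous.continuousOn)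
  have hbound : ∀ n : ℤ, n ≠ 0 → ‖fc u n‖ ≤ C / (2 * Real.pi) ^ 2 * (1 / (n:ℝ) ^ 2) := by
    intro n hn
    have h2 : ‖fc (iteratedDeriv 2 u) n‖ ≤ C := fc_norm_le hC n
    rw [fc_iteratedDeriv hu 2 n, norm_mul, norm_pow] at h2
    have hnorm : ‖2 * (Real.pi:ℂ) * Complex.I * (n:ℂ)‖ = 2 * Real.pi * |(n:ℝ)| := by
      simp [norm_mul, abs_of_pos Real.pi_pos]
    rw [hnorm] at h2
    have hA : (2 * Real.pi * |(n:ℝ)|) ^ 2 = (2 * Real.pi) ^ 2 * (n:ℝ) ^ 2 := by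
      rw [mul_pow, _root_.sq_abs]
    rw [hA] at h2
    have hpos : (0:ℝ) < (2 * Real.pi) ^ 2 * (n:ℝ) ^ 2 := by
      have hn' : ((n:ℝ)) ≠ 0 := Int.cast_ne_zero.mpr hn
      positivity
    have heq : C / (2 * Real.pi) ^ 2 * (1 / (n:ℝ) ^ 2)
        = C / ((2 * Real.pi) ^ 2 * (n:ℝ) ^ 2) := by
      rw [div_mul_div_comm, mul_one]
    rw [heq, le_div_iff₀ hpos]
    linarith [h2]
  apply Summable.of_norm_bounded_eventually
    (g := fun n : ℤ => C / (2 * Real.pi) ^ 2 * (1 / (n:ℝ) ^ 2))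
    (((Real.summable_one_div_int_pow (p := 2)).mpr one_lt_two).mul_left _)
  rw [Filter.eventually_cofinite]
  apply Set.Finite.subset (Set.finite_singleton (0:ℤ))
  intro n hn
  simp only [Set.mem_setOf_eq] at hn
  simp only [Set.mem_singleton_iff]
  by_contra h0
  exact hn (hbound n h0)

lemma fourier_tendsto {u : ℝ → ℂ} (hu : SmoothPeriodic u) :
    TendstoUniformly (fun (j : ℕ) (x : ℝ) =>
      ∑ i ∈ Finset.Icc (-(j:ℤ)) (j:ℤ), fc u i * Efun i x) u atTop := by
  haveI : Fact (0 < (1:ℝ)) := ⟨one_pos⟩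
  have hFc : Continuous (hu.2.lift) :=
    (QuotientAddGroup.isQuotientMap_mk (AddSubgroup.zmultiples (1:ℝ))).continuous_iff.mpr
      hu.1.continuous
  set F : C(AddCircle (1:ℝ), ℂ) := ⟨hu.2.lift, hFc⟩ with hF
  have hcoeff : ∀ n, fourierCoeff (⇑F) n = fc u n := by
    intro n
    rw [show fourierCoeff (⇑F) n = (1 / (1:ℝ)) • ∫ x in (0:ℝ)..0 + 1,
        fourier (-n) (x : AddCircle (1:ℝ)) • F ((x:ℝ) : AddCircle (1:ℝ)) from
      fourierCoeff_eq_intervalIntegral (⇑F) n 0]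
    rw [show fc u n = (1 / ((1:ℝ) - 0)) • ∫ x in (0:ℝ)..1,
        fourier (-n) (x : AddCircle ((1:ℝ) - 0)) • u x from fourierCoeffOn_eq_integral _ _ _]
    norm_num
    apply intervalIntegral.integral_congr
    intro x hx
    have hFx : F ((x:ℝ) : AddCircle (1:ℝ)) = u x := hu.2.lift_coe x
    simp only [hFx]
  have hsum : Summable (fourierCoeff (⇑F)) := by
    rw [show fourierCoeff (⇑F) = fc u from funext hcoeff]; exact fc_summable hu
  have hHasSum := hasSum_fourier_series_of_summable hsum
  have hIcc : Tendsto (fun j : ℕ => Finset.Icc (-(j:ℤ)) (j:ℤ)) atTop atTop := by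
    apply tendsto_atTop_finset_of_monotone
    · intro a b hab
      exact Finset.Icc_subset_Icc (by exact_mod_cast neg_le_neg (Int.ofNat_le.mpr hab))
        (by exact_mod_cast hab)
    · intro i; exact ⟨i.natAbs, by simp only [Finset.mem_Icc]; omega⟩
  have h2 : Tendsto (fun j : ℕ => ∑ i ∈ Finset.Icc (-(j:ℤ)) (j:ℤ),
      fourierCoeff (⇑F) i • fourier i) atTop (𝓝 F) := hHasSum.comp hIcc
  have h3 := (ContinuousMap.tendsto_iff_tendstoUniformly).mp h2
  have h4 := h3.comp (fun x : ℝ => ((x : ℝ) : AddCircle (1:ℝ)))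
  have e2 : (fun (j : ℕ) => (fun z : AddCircle (1:ℝ) =>
        (∑ i ∈ Finset.Icc (-(j:ℤ)) (j:ℤ), fourierCoeff (⇑F) i • fourier i) z) ∘
          (fun x : ℝ => ((x : ℝ) : AddCircle (1:ℝ))))
      = fun (j : ℕ) (x : ℝ) => ∑ i ∈ Finset.Icc (-(j:ℤ)) (j:ℤ), fc u i * Efun i x := by
    funext j x
    simp only [Function.comp_apply, ContinuousMap.sum_apply, ContinuousMap.smul_apply,
      smul_eq_mul]
    refine Finset.sum_congr rfl fun i _ => ?_
    rw [hcoeff i]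
    congr 1
    rw [fourier_coe_apply]
    norm_num [Efun]
  have e1 : ((⇑F) ∘ (fun x : ℝ => ((x : ℝ) : AddCircle (1:ℝ)))) = u :=
    funext fun x => hu.2.lift_coe x
  rw [e2, e1] at h4
  exact h4

/-- All derivatives of the symmetric partial Fourier sums converge uniformly. -/
lemma pSum_tendsto_all {u : ℝ → ℂ} (hu : SmoothPeriodic u) (k : ℕ) :
    TendstoUniformly
      (fun j : ℕ => iteratedDeriv k (trig (Finset.Icc (-(j:ℤ)) (j:ℤ)) (fc u)))
      (iteratedDeriv k u) atTop := by
  have h2 := fourier_tendsto (hu.iteratedDeriv' k)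
  have h1 : (fun j : ℕ => iteratedDeriv k (trig (Finset.Icc (-(j:ℤ)) (j:ℤ)) (fc u)))
      = fun (j : ℕ) (x : ℝ) => ∑ i ∈ Finset.Icc (-(j:ℤ)) (j:ℤ),
          fc (iteratedDeriv k u) i * Efun i x := by
    funext j x
    rw [iteratedDeriv_trig]
    exact Finset.sum_congr rfl fun i _ => by rw [fc_iteratedDeriv hu k i]
  rw [h1]
  exact h2

lemma P_trig (P : (ℝ → ℂ) → (ℝ → ℂ))
    (hadd : ∀ u v, SmoothPeriodic u → SmoothPeriodic v → P (u + v) = P u + P v)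
    (hsmul : ∀ (c : ℂ) (u), SmoothPeriodic u → P (c • u) = c • P u)
    {p : ℤ → ℂ} (hp : ∀ n : ℤ, P (Efun n) = fun x => p n * Efun n x)
    (t : Finset ℤ) (b : ℤ → ℂ) :
    P (trig t b) = trig t (fun i => b i * p i) := by
  induction t using Finset.induction with
  | empty =>
    have h0 : trig (∅ : Finset ℤ) b = (0:ℂ) • (Efun 0) := by
      funext x; simp [trig]
    rw [h0, hsmul _ _ (Efun_smoothPeriodic 0)]
    funext x; simp [trig]
  | @insert a s ha ih =>
    have hsplit : trig (insert a s) b = (b a • Efun a) + trig s b := by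
      funext x
      simp [trig, Finset.sum_insert ha]
    rw [hsplit, hadd _ _ ((Efun_smoothPeriodic a).const_smul (b a)) (trig_smoothPeriodic s b),
      hsmul _ _ (Efun_smoothPeriodic a), ih]
    funext x
    simp only [Pi.add_apply, Pi.smul_apply, hp a, smul_eq_mul, trig,
      Finset.sum_insert ha]
    ring

end Stmt13Aux

open Topology in
/-- Let `P` be a continuous linear operator on the Fréchet space
`C^∞(𝕊¹, ℂ)` (realized as smooth `1`-periodic functions on `ℝ`; continuity is expressed
as sequential continuity for the `C^∞` topology of uniform convergence of all
derivatives). Then the following are equivalent: (1) `P` commutes with all rotations;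
(2) `P` commutes with `d/dx`; (3) each exponential `e_n(x) = exp(2πinx)` is an
eigenfunction of `P`. -/
theorem stmt13 (P : (ℝ → ℂ) → (ℝ → ℂ))
    (hmap : ∀ u, SmoothPeriodic u → SmoothPeriodic (P u))
    (hadd : ∀ u v, SmoothPeriodic u → SmoothPeriodic v → P (u + v) = P u + P v)
    (hsmul : ∀ (c : ℂ) (u), SmoothPeriodic u → P (c • u) = c • P u)
    (hcont : ∀ (u : ℕ → ℝ → ℂ) (v : ℝ → ℂ), (∀ j, SmoothPeriodic (u j)) →
      SmoothPeriodic v →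
      (∀ k : ℕ, TendstoUniformly (fun j => iteratedDeriv k (u j))
        (iteratedDeriv k v) atTop) →
      ∀ k : ℕ, TendstoUniformly (fun j => iteratedDeriv k (P (u j)))
        (iteratedDeriv k (P v)) atTop) :
    ((∀ s : ℝ, ∀ u, SmoothPeriodic u →
        P (fun x => u (x + s)) = fun x => P u (x + s)) ↔
      (∀ u, SmoothPeriodic u → P (deriv u) = deriv (P u)))
    ∧
    ((∀ u, SmoothPeriodic u → P (deriv u) = deriv (P u)) ↔
      (∀ n : ℤ, ∃ c : ℂ,
        P (fun x : ℝ => Complex.exp (2 * Real.pi * Complex.I * n * (x:ℂ)))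
          = fun x : ℝ => c * Complex.exp (2 * Real.pi * Complex.I * n * (x:ℂ)))) := by
  -- (1) → (3)
  have h13 : (∀ s : ℝ, ∀ u, SmoothPeriodic u →
      P (fun x => u (x + s)) = fun x => P u (x + s)) →
      (∀ n : ℤ, ∃ c : ℂ, P (Efun n) = fun x => c * Efun n x) := by
    intro h1 n
    refine ⟨P (Efun n) 0, funext fun s => ?_⟩
    have h := congr_fun (h1 s (Efun n) (Efun_smoothPeriodic n)) 0
    have e : (fun x => Efun n (x + s)) = Efun n s • Efun n :=
      funext fun x => by rw [Efun_add]; rfl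
    rw [e, hsmul _ _ (Efun_smoothPeriodic n)] at h
    simp only [Pi.smul_apply, smul_eq_mul, zero_add] at h
    rw [← h]; ring
  -- (2) → (3)
  have h23 : (∀ u, SmoothPeriodic u → P (deriv u) = deriv (P u)) →
      (∀ n : ℤ, ∃ c : ℂ, P (Efun n) = fun x => c * Efun n x) := by
    intro h2 n
    have hD := h2 (Efun n) (Efun_smoothPeriodic n)
    rw [deriv_Efun] at hD
    have e : (fun x => 2 * Real.pi * Complex.I * n * Efun n x)
        = (2 * Real.pi * Complex.I * (n:ℂ)) • Efun n := rfl
    rw [e, hsmul _ _ (Efun_smoothPeriodic n)] at hD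
    have hf : SmoothPeriodic (P (Efun n)) := hmap _ (Efun_smoothPeriodic n)
    have hg : ∀ x : ℝ, HasDerivAt (fun y => P (Efun n) y * Efun (-n) y) 0 x := by
      intro x
      have hd1 : HasDerivAt (P (Efun n)) (2 * Real.pi * Complex.I * n * P (Efun n) x) x := by
        have h1 := (hf.differentiable' x).hasDerivAt
        have h2' : deriv (P (Efun n)) x = 2 * Real.pi * Complex.I * n * P (Efun n) x := by
          rw [← hD]; simp
        rwa [h2'] at h1
      have hd2 := Efun_hasDerivAt (-n) x
      have hmul := hd1.mul hd2
      refine hmul.congr_deriv ?_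
      push_cast
      ring
    have hconst := is_const_of_deriv_eq_zero
      (fun x => (hg x).differentiableAt) (fun x => (hg x).deriv)
    refine ⟨P (Efun n) 0, funext fun x => ?_⟩
    have hx0 := hconst x 0
    rw [show Efun (-n) (0:ℝ) = 1 from Efun_zero_eval (-n), mul_one] at hx0
    have := congr_arg (fun z => z * Efun n x) hx0
    calc P (Efun n) x = P (Efun n) x * (Efun n x * Efun (-n) x) := by
            rw [Efun_mul_neg, mul_one]
      _ = P (Efun n) x * Efun (-n) x * Efun n x := by ring
      _ = P (Efun n) 0 * Efun n x := this
  -- (3) → (2)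
  have h32 : (∀ n : ℤ, ∃ c : ℂ, P (Efun n) = fun x => c * Efun n x) →
      (∀ u, SmoothPeriodic u → P (deriv u) = deriv (P u)) := by
    intro h3 u hu
    choose p hp using h3
    set S : ℕ → ℝ → ℂ := fun j => trig (Finset.Icc (-(j:ℤ)) (j:ℤ)) (fc u) with hS
    have hSsp : ∀ j, SmoothPeriodic (S j) := fun j => trig_smoothPeriodic _ _
    have hSconv : ∀ k, TendstoUniformly (fun j => iteratedDeriv k (S j))
        (iteratedDeriv k u) atTop := pSum_tendsto_all hu
    have hPS := hcont S u hSsp hu hSconv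
    have hPSj : ∀ j, P (S j) = trig (Finset.Icc (-(j:ℤ)) (j:ℤ)) (fun i => fc u i * p i) :=
      fun j => P_trig P hadd hsmul hp _ _
    have hA : TendstoUniformly (fun j => deriv (P (S j))) (deriv (P u)) atTop := by
      simpa [iteratedDeriv_one] using hPS 1
    set S' : ℕ → ℝ → ℂ := fun j => trig (Finset.Icc (-(j:ℤ)) (j:ℤ)) (fc (deriv u)) with hS'
    have hS'conv : ∀ k, TendstoUniformly (fun j => iteratedDeriv k (S' j))
        (iteratedDeriv k (deriv u)) atTop := pSum_tendsto_all hu.deriv'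
    have hPS'0 : TendstoUniformly (fun j => P (S' j)) (P (deriv u)) atTop := by
      simpa [iteratedDeriv_zero] using
        hcont S' (deriv u) (fun j => trig_smoothPeriodic _ _) hu.deriv' hS'conv 0
    have heq : ∀ j, P (S' j) = deriv (P (S j)) := by
      intro j
      rw [hPSj j, hS']
      rw [P_trig P hadd hsmul hp _ _]
      have hd := iteratedDeriv_trig 1 (Finset.Icc (-(j:ℤ)) (j:ℤ)) (fun i => fc u i * p i)
      rw [iteratedDeriv_one] at hd
      rw [hd]
      funext x
      refine Finset.sum_congr rfl fun i _ => ?_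
      beta_reduce
      rw [fc_deriv hu]
      ring
    funext x
    have t1 : Tendsto (fun j => P (S' j) x) atTop (𝓝 (P (deriv u) x)) := hPS'0.tendsto_at x
    have t2 : Tendsto (fun j => P (S' j) x) atTop (𝓝 (deriv (P u) x)) := by
      have hAx := hA.tendsto_at x
      have e : (fun j => deriv (P (S j)) x) = fun j => P (S' j) x :=
        funext fun j => by rw [heq j]
      rwa [e] at hAx
    exact tendsto_nhds_unique t1 t2
  -- (3) → (1)
  have h31 : (∀ n : ℤ, ∃ c : ℂ, P (Efun n) = fun x => c * Efun n x) →
      (∀ s : ℝ, ∀ u, SmoothPeriodic u →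
        P (fun x => u (x + s)) = fun x => P u (x + s)) := by
    intro h3 s u hu
    choose p hp using h3
    set S : ℕ → ℝ → ℂ := fun j => trig (Finset.Icc (-(j:ℤ)) (j:ℤ)) (fc u) with hS
    have hSsp : ∀ j, SmoothPeriodic (S j) := fun j => trig_smoothPeriodic _ _
    have hSconv : ∀ k, TendstoUniformly (fun j => iteratedDeriv k (S j))
        (iteratedDeriv k u) atTop := pSum_tendsto_all hu
    have hPSj : ∀ j, P (S j) = trig (Finset.Icc (-(j:ℤ)) (j:ℤ)) (fun i => fc u i * p i) :=
      fun j => P_trig P hadd hsmul hp _ _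
    have hshift_sp : ∀ j, SmoothPeriodic (fun x => S j (x + s)) :=
      fun j => (hSsp j).shift s
    have hushift : SmoothPeriodic (fun x => u (x + s)) := hu.shift s
    have hconv : ∀ k, TendstoUniformly (fun j => iteratedDeriv k (fun x => S j (x + s)))
        (iteratedDeriv k (fun x => u (x + s))) atTop := by
      intro k
      have hcomp := (hSconv k).comp (fun x : ℝ => x + s)
      have e1 : (fun j => iteratedDeriv k (fun x => S j (x + s)))
          = fun j => (iteratedDeriv k (S j)) ∘ (fun x : ℝ => x + s) := by
        funext j
        rw [iteratedDeriv_comp_add_const]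
        rfl
      have e2 : iteratedDeriv k (fun x => u (x + s))
          = (iteratedDeriv k u) ∘ (fun x : ℝ => x + s) := by
        rw [iteratedDeriv_comp_add_const]
        rfl
      rw [e1, e2]
      exact hcomp
    have hP1 : TendstoUniformly (fun j => P (fun x => S j (x + s)))
        (P (fun x => u (x + s))) atTop := by
      simpa [iteratedDeriv_zero] using
        hcont (fun j => fun x => S j (x + s)) (fun x => u (x + s)) hshift_sp hushift hconv 0
    have hPS0 : TendstoUniformly (fun j => P (S j)) (P u) atTop := by
      simpa [iteratedDeriv_zero] using hcont S u hSsp hu hSconv 0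
    have hshiftlim := hPS0.comp (fun x : ℝ => x + s)
    funext x
    have t1 : Tendsto (fun j => P (fun y => S j (y + s)) x) atTop
        (𝓝 (P (fun y => u (y + s)) x)) := hP1.tendsto_at x
    have t2 : Tendsto (fun j => (P (S j)) (x + s)) atTop (𝓝 (P u (x + s))) :=
      hshiftlim.tendsto_at x
    have e : ∀ j, P (fun y => S j (y + s)) x = P (S j) (x + s) := by
      intro j
      have hSshift : (fun y => S j (y + s))
          = trig (Finset.Icc (-(j:ℤ)) (j:ℤ)) (fun i => fc u i * Efun i s) := by
        funext y
        simp only [hS, trig]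
        refine Finset.sum_congr rfl fun i _ => ?_
        rw [Efun_add]
        ring
      rw [hSshift, P_trig P hadd hsmul hp _ _, hPSj j]
      simp only [trig]
      refine Finset.sum_congr rfl fun i _ => ?_
      rw [Efun_add]
      ring
    have t1' : Tendsto (fun j => P (S j) (x + s)) atTop
        (𝓝 (P (fun y => u (y + s)) x)) := by
      have e' : (fun j => P (fun y => S j (y + s)) x) = fun j => P (S j) (x + s) :=
        funext fun j => e j
      rwa [e'] at t1
    exact tendsto_nhds_unique t1' t2
  exact ⟨⟨fun h1 => h32 (h13 h1), fun h2 => h31 (h23 h2)⟩, ⟨h23, h32⟩⟩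
end
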